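/- Let v_1,...,v_n be real numbers and Δ a real number with min_i v_i < Δ < max_i v_i. Then the maximum of Π_{i=1}^n p_i over probability vectors (p_1,...,p_n) with p_i > 0, Σ p_i = 1, and Σ p_i (v_i − Δ) = 0 is attained, and at the maximizer p_i = (1/n)(1 + λ(v_i − Δ))^{−1} for some λ satisfying (1/n) Σ_i (v_i − Δ)/(1 + λ(v_i − Δ)) = 0. -/

import Mathlib

/-!
With `uᵢ = vᵢ - Δ`, the function `λ ↦ ∑ uᵢ / (1 + λ uᵢ)` is continuous on the interval where all
`1 + λ uᵢ > 0`, and it is nonnegative near the left end and nonpositive near the right end, because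
there the term of a largest (resp. smallest) `uᵢ` blows up while every other term `uᵢ / (1 + λ uᵢ)`
is at least (resp. at most) `uᵢ`. The intermediate value theorem gives a root `λ`, and the weights
`pᵢ = (1/n)(1 + λ uᵢ)⁻¹` are then feasible. For any feasible `q` one has `∑ qᵢ / pᵢ = n`, so
`log x ≤ x - 1` gives `∑ log (qᵢ / pᵢ) ≤ 0`, i.e. `∏ qᵢ ≤ ∏ pᵢ`.
-/

open Finset

namespace EmpiricalLikelihood

variable {ι : Type*} [Fintype ι]

theorem le_div_one_add_mul_of_nonpos {u l : ℝ} (hl : l ≤ 0) (h : 0 < 1 + l * u) :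
    u ≤ u / (1 + l * u) := by
  rw [le_div_iff₀ h]
  nlinarith [sq_nonneg u]

theorem exists_nonpos_forall_pos_and_sum_nonneg (u : ι → ℝ) (hpos : ∃ i, 0 < u i) :
    ∃ l ≤ 0, (∀ i, 0 < 1 + l * u i) ∧ 0 ≤ ∑ i, u i / (1 + l * u i) := by
  obtain ⟨j, hj⟩ := hpos
  have : Nonempty ι := ⟨j⟩
  obtain ⟨i₀, hi₀⟩ := Finite.exists_max u
  set M := u i₀
  have hM : 0 < M := hj.trans_le (hi₀ j)
  set a := |∑ i, u i|
  have ha : 0 ≤ a := abs_nonneg _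
  -- `l` makes the term of index `i₀` equal to `a + M`, enough to outweigh `∑ i, u i ≥ -a`.
  set l := -a / (M * (a + M))
  have hl : l ≤ 0 := div_nonpos_of_nonpos_of_nonneg (neg_nonpos.mpr ha) (by positivity)
  have hlM : 1 + l * M = M / (a + M) := by
    simp only [l]
    field_simp
    ring
  have hden : ∀ i, 0 < 1 + l * u i := fun i => by
    have : 0 < 1 + l * M := by rw [hlM]; positivity
    nlinarith [hi₀ i]
  refine ⟨l, hl, hden, ?_⟩
  have hterm : M / (1 + l * M) = a + M := by
    rw [hlM]
    field_simp
  have hexcess : M / (1 + l * M) - M ≤ ∑ i, (u i / (1 + l * u i) - u i) :=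
    single_le_sum (fun i _ => sub_nonneg.mpr (le_div_one_add_mul_of_nonpos hl (hden i)))
      (mem_univ i₀)
  rw [sum_sub_distrib, hterm] at hexcess
  linarith [neg_abs_le (∑ i, u i)]

theorem exists_forall_pos_and_sum_eq_zero (u : ι → ℝ) (hneg : ∃ i, u i < 0)
    (hpos : ∃ i, 0 < u i) :
    ∃ l, (∀ i, 0 < 1 + l * u i) ∧ ∑ i, u i / (1 + l * u i) = 0 := by
  obtain ⟨l₁, hl₁, hden₁, hsum₁⟩ := exists_nonpos_forall_pos_and_sum_nonneg u hpos
  obtain ⟨l₂, hl₂, hden₂, hsum₂⟩ :=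
    exists_nonpos_forall_pos_and_sum_nonneg (-u) (hneg.imp fun _ => neg_pos.mpr)
  simp only [Pi.neg_apply, mul_neg, ← neg_mul, neg_div, sum_neg_distrib, neg_nonneg] at hden₂ hsum₂
  have hden : ∀ l ∈ Set.Icc l₁ (-l₂), ∀ i, 0 < 1 + l * u i := by
    rintro l ⟨h₁, h₂⟩ i
    rcases le_total 0 (u i) with hu | hu
    · nlinarith [hden₁ i]
    · nlinarith [hden₂ i]
  have hcont : ContinuousOn (fun l => ∑ i, u i / (1 + l * u i)) (Set.Icc l₁ (-l₂)) :=
    continuousOn_finsetSum _ fun i _ =>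
      continuousOn_const.div (by fun_prop) fun l hl => (hden l hl i).ne'
  obtain ⟨l, hl, hsum⟩ :=
    intermediate_value_Icc' (by linarith) hcont ⟨hsum₂, hsum₁⟩
  exact ⟨l, hden l hl, hsum⟩

theorem prod_le_one_of_sum_le_card {z : ι → ℝ} (hz : ∀ i, 0 < z i)
    (h : ∑ i, z i ≤ Fintype.card ι) : ∏ i, z i ≤ 1 := by
  rw [← Real.log_nonpos_iff (prod_pos fun i _ => hz i).le,
    Real.log_prod fun i _ => (hz i).ne']
  calc ∑ i, Real.log (z i) ≤ ∑ i, (z i - 1) :=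
        sum_le_sum fun i _ => Real.log_le_sub_one_of_pos (hz i)
    _ ≤ 0 := by simpa [sum_sub_distrib] using h

theorem prod_le_prod_of_sum_div_le_card {p q : ι → ℝ} (hp : ∀ i, 0 < p i)
    (hq : ∀ i, 0 < q i) (h : ∑ i, q i / p i ≤ Fintype.card ι) : ∏ i, q i ≤ ∏ i, p i := by
  have := prod_le_one_of_sum_le_card (fun i => div_pos (hq i) (hp i)) h
  rwa [prod_div_distrib, div_le_one (prod_pos fun i _ => hp i)] at this

noncomputable def weights (u : ι → ℝ) (l : ℝ) (i : ι) : ℝ :=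
  1 / (Fintype.card ι : ℝ) * (1 + l * u i)⁻¹

section Weights

variable {u : ι → ℝ} {l : ℝ}

theorem weights_pos [Nonempty ι] (hden : ∀ i, 0 < 1 + l * u i) (i : ι) : 0 < weights u l i := by
  have := hden i
  unfold weights
  positivity

theorem sum_weights_mul_eq_zero (hden : ∀ i, 0 < 1 + l * u i)
    (hsum : ∑ i, u i / (1 + l * u i) = 0) : ∑ i, weights u l i * u i = 0 := by
  have (i : ι) : weights u l i * u i = 1 / Fintype.card ι * (u i / (1 + l * u i)) := by
    unfold weights
    field_simp [(hden i).ne']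
  simp only [this, ← mul_sum, hsum, mul_zero]

theorem sum_weights [Nonempty ι] (hden : ∀ i, 0 < 1 + l * u i)
    (hsum : ∑ i, u i / (1 + l * u i) = 0) : ∑ i, weights u l i = 1 := by
  have (i : ι) : weights u l i = 1 / Fintype.card ι * (1 - l * (u i / (1 + l * u i))) := by
    unfold weights
    field_simp [(hden i).ne']
    ring
  simp only [this, ← mul_sum, sum_sub_distrib, hsum, mul_zero, sub_zero, sum_const, card_univ,
    nsmul_eq_mul, mul_one]
  field_simp [Fintype.card_ne_zero]

theorem prod_le_prod_weights [Nonempty ι] (hden : ∀ i, 0 < 1 + l * u i) {q : ι → ℝ}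
    (hq : ∀ i, 0 < q i) (hq₁ : ∑ i, q i = 1) (hqu : ∑ i, q i * u i = 0) :
    ∏ i, q i ≤ ∏ i, weights u l i := by
  refine prod_le_prod_of_sum_div_le_card (weights_pos hden) hq (le_of_eq ?_)
  have (i : ι) : q i / weights u l i = Fintype.card ι * (q i + l * (q i * u i)) := by
    unfold weights
    field_simp [(hden i).ne']
  simp only [this, ← mul_sum, sum_add_distrib, hq₁, hqu, mul_zero, add_zero, mul_one]

end Weights

end EmpiricalLikelihood

theorem empirical_likelihood_maximizer_general
    (n : ℕ) (v : Fin n → ℝ) (Δ : ℝ)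
    (hmin : ∃ i, v i < Δ) (hmax : ∃ i, Δ < v i) :
    ∃ p : Fin n → ℝ,
      (∀ i, 0 < p i) ∧ (∑ i, p i = 1) ∧ (∑ i, p i * (v i - Δ) = 0) ∧
      (∀ q : Fin n → ℝ, (∀ i, 0 < q i) → (∑ i, q i = 1) →
        (∑ i, q i * (v i - Δ) = 0) → ∏ i, q i ≤ ∏ i, p i) ∧
      ∃ lam : ℝ,
        (∀ i, p i = (1 / (n : ℝ)) * (1 + lam * (v i - Δ))⁻¹) ∧
        (1 / (n : ℝ)) * ∑ i, (v i - Δ) / (1 + lam * (v i - Δ)) = 0 := by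
  have : Nonempty (Fin n) := hmin.nonempty
  obtain ⟨l, hden, hsum⟩ :=
    EmpiricalLikelihood.exists_forall_pos_and_sum_eq_zero (fun i => v i - Δ)
      (hmin.imp fun _ => sub_neg.mpr) (hmax.imp fun _ => sub_pos.mpr)
  refine ⟨EmpiricalLikelihood.weights (fun i => v i - Δ) l,
    EmpiricalLikelihood.weights_pos hden, EmpiricalLikelihood.sum_weights hden hsum,
    EmpiricalLikelihood.sum_weights_mul_eq_zero hden hsum,
    fun q => EmpiricalLikelihood.prod_le_prod_weights hden, l,
    fun i => by simp only [EmpiricalLikelihood.weights, Fintype.card_fin], by rw [hsum, mul_zero]⟩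

/-- If `min_i v_i < Δ < max_i v_i`, the maximum of `Π pᵢ` over
probability vectors with `pᵢ > 0`, `Σ pᵢ = 1`, `Σ pᵢ (vᵢ − Δ) = 0` is attained,
and the maximizer has the form `pᵢ = (1/n)(1 + λ(vᵢ − Δ))⁻¹` for a Lagrange
multiplier `λ` solving `(1/n) Σᵢ (vᵢ − Δ)/(1 + λ(vᵢ − Δ)) = 0`. -/
theorem empirical_likelihood_maximizer
    (n : ℕ) (hn : 0 < n) (v : Fin n → ℝ) (Δ : ℝ)
    (hmin : ∃ i, v i < Δ) (hmax : ∃ i, Δ < v i) :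
    ∃ p : Fin n → ℝ,
      (∀ i, 0 < p i) ∧ (∑ i, p i = 1) ∧ (∑ i, p i * (v i - Δ) = 0) ∧
      (∀ q : Fin n → ℝ, (∀ i, 0 < q i) → (∑ i, q i = 1) →
        (∑ i, q i * (v i - Δ) = 0) → ∏ i, q i ≤ ∏ i, p i) ∧
      ∃ lam : ℝ,
        (∀ i, p i = (1 / (n : ℝ)) * (1 + lam * (v i - Δ))⁻¹) ∧
        (1 / (n : ℝ)) * ∑ i, (v i - Δ) / (1 + lam * (v i - Δ)) = 0 :=
  empirical_likelihood_maximizer_general n v Δ hmin hmax
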